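/- arXiv:1812.09867 — 2 statements merged into one kernel-verified Lean document; each statement's English description precedes it below -/
import Mathlib

section
/- For finite sets A, B, C contained in a common ambient type, each pairwise union nonempty, the Jaccard distance d(A,B) = 1 − |A ∩ B|/|A ∪ B| satisfies the triangle inequality: d(A,C) ≤ d(A,B) + d(B,C). -/
/-!
Write the Jaccard distance as `|A ∆ C| / |A ∪ C|`. Enlarging the denominator to `|A ∪ B ∪ C|`
adds `t = |B \ (A ∪ C)|` to it; adding `t` to the numerator as well can only increase a fraction
at most `1`. The new numerator `|A ∆ C| + t` is at most `|A ∆ B| + |B ∆ C|`, because `A ∆ C` lies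
in the union of `A ∆ B` and `B ∆ C` while `B \ (A ∪ C)` lies in their intersection. Finally
`|A ∆ B| / |A ∪ B ∪ C| ≤ |A ∆ B| / |A ∪ B|`, and likewise for `B, C`.
-/

open Finset
open scoped symmDiff

lemma div_le_add_div_add {K : Type*} [Field K] [LinearOrder K] [IsStrictOrderedRing K]
    {a b c : K} (ha : 0 ≤ a) (hab : a ≤ b) (hc : 0 ≤ c) : a / b ≤ (a + c) / (b + c) := by
  rcases hab.lt_or_eq with hab | rfl
  · have hb : 0 < b := ha.trans_lt hab
    rw [div_le_div_iff₀ hb (by positivity)]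
    nlinarith
  · rcases ha.lt_or_eq with ha | rfl
    · rw [div_self ha.ne', le_div_iff₀ (by positivity), one_mul]
    · simpa using div_nonneg hc hc

section Jaccard

variable {α : Type*} [DecidableEq α]

/-- The Jaccard distance, in the form `|s ∆ t| / |s ∪ t|`, which is `0` rather than `1` when
`s = t = ∅`. -/
noncomputable def jaccardDist (s t : Finset α) : ℝ := #(s ∆ t) / #(s ∪ t)

lemma card_inter_add_card_symmDiff (s t : Finset α) : #(s ∩ t) + #(s ∆ t) = #(s ∪ t) := by
  rw [symmDiff_eq_sup_sdiff_inf, add_comm]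
  exact card_sdiff_add_card_eq_card inter_subset_union

lemma one_sub_card_inter_div_card_union {s t : Finset α} (h : (s ∪ t).Nonempty) :
    1 - (#(s ∩ t) : ℝ) / #(s ∪ t) = jaccardDist s t := by
  have hpos : (0 : ℝ) < #(s ∪ t) := by exact_mod_cast h.card_pos
  rw [jaccardDist, eq_div_iff hpos.ne', sub_mul, div_mul_cancel₀ _ hpos.ne', one_mul,
    ← card_inter_add_card_symmDiff]
  push_cast
  ring

lemma card_symmDiff_add_card_sdiff_union_le (s t u : Finset α) :
    #(s ∆ u) + #(t \ (s ∪ u)) ≤ #(s ∆ t) + #(t ∆ u) := by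
  have hsdiff : t \ (s ∪ u) ⊆ s ∆ t ∩ t ∆ u := by
    intro x hx
    simp only [mem_sdiff, mem_union, mem_inter, mem_symmDiff] at *
    tauto
  calc #(s ∆ u) + #(t \ (s ∪ u))
      ≤ #(s ∆ t ∪ t ∆ u) + #(s ∆ t ∩ t ∆ u) :=
        add_le_add (card_le_card (symmDiff_triangle s t u)) (card_le_card hsdiff)
    _ = #(s ∆ t) + #(t ∆ u) := card_union_add_card_inter _ _

lemma card_symmDiff_div_card_le_jaccardDist {s t u : Finset α} (h : s ∪ t ⊆ u) :
    (#(s ∆ t) : ℝ) / #u ≤ jaccardDist s t := by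
  rcases (s ∪ t).eq_empty_or_nonempty with hst | hst
  · have : s ∆ t = ∅ := subset_empty.mp (hst ▸ symmDiff_subset_union)
    simp [jaccardDist, this]
  · exact div_le_div_of_nonneg_left (by positivity) (by exact_mod_cast hst.card_pos)
      (by exact_mod_cast card_le_card h)

theorem jaccardDist_triangle (s t u : Finset α) :
    jaccardDist s u ≤ jaccardDist s t + jaccardDist t u := by
  have hunion : (#(s ∪ u) : ℝ) + #(t \ (s ∪ u)) = #(s ∪ t ∪ u) := by
    rw [add_comm, union_right_comm, union_comm (s ∪ u)]
    exact_mod_cast card_sdiff_add_card t (s ∪ u)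
  calc jaccardDist s u
      ≤ (#(s ∆ u) + #(t \ (s ∪ u)) : ℝ) / (#(s ∪ u) + #(t \ (s ∪ u))) :=
        div_le_add_div_add (by positivity) (by exact_mod_cast card_le_card symmDiff_subset_union)
          (by positivity)
    _ ≤ (#(s ∆ t) + #(t ∆ u) : ℝ) / #(s ∪ t ∪ u) := by
        rw [hunion]
        gcongr ?_ / _
        exact_mod_cast card_symmDiff_add_card_sdiff_union_le s t u
    _ = (#(s ∆ t) : ℝ) / #(s ∪ t ∪ u) + #(t ∆ u) / #(s ∪ t ∪ u) := add_div _ _ _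
    _ ≤ jaccardDist s t + jaccardDist t u :=
        add_le_add (card_symmDiff_div_card_le_jaccardDist subset_union_left)
          (card_symmDiff_div_card_le_jaccardDist (union_assoc s t u ▸ subset_union_right))

end Jaccard

/-- The Jaccard distance `d(A,B) = 1 - |A ∩ B|/|A ∪ B|` satisfies the triangle
inequality. -/
theorem jaccard_distance_triangle {α : Type*} [DecidableEq α]
    (A B C : Finset α)
    (hAB : (A ∪ B).Nonempty) (hBC : (B ∪ C).Nonempty) (hAC : (A ∪ C).Nonempty) :
    1 - ((A ∩ C).card : ℝ) / ((A ∪ C).card : ℝ) ≤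
      (1 - ((A ∩ B).card : ℝ) / ((A ∪ B).card : ℝ)) +
      (1 - ((B ∩ C).card : ℝ) / ((B ∪ C).card : ℝ)) := by
  rw [one_sub_card_inter_div_card_union hAC, one_sub_card_inter_div_card_union hAB,
    one_sub_card_inter_div_card_union hBC]
  exact jaccardDist_triangle A B C
end

section
/- Let S_1, S_2 be finite nonempty sets with ρ* = J(S_1, S_2), and let V_1 ⊆ S_1, V_2 ⊆ S_2 with |S_i ∖ V_i| ≤ η·|S_1 ∪ S_2| for i = 1,2 and some η ≥ 0. Then |J(V_1, V_2) − ρ*| ≤ 4η/(1 − 2η), provided η < 1/2 and V_1 ∪ V_2 ≠ ∅. -/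
/-!
Every point of `S₁ ∩ S₂` (resp. `S₁ ∪ S₂`) outside `V₁ ∩ V₂` (resp. `V₁ ∪ V₂`) lies in
`S₁ \ V₁` or `S₂ \ V₂`, so shrinking the `Sᵢ` to the `Vᵢ` lowers both the intersection `I`
and the union `U` by at most `ε U`, where `ε = 2η`. Over the common denominator the numerator
satisfies `|i U - I u| ≤ ε U²` while `u U ≥ (1 - ε) U²`, so the two Jaccard ratios differ by at
most `ε / (1 - ε) = 2η / (1 - 2η)`.
-/

open Finset

namespace Finset

variable {α : Type*} [DecidableEq α]

theorem card_inter_le_card_inter_add_card_sdiff (S₁ S₂ V₁ V₂ : Finset α) :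
    #(S₁ ∩ S₂) ≤ #(V₁ ∩ V₂) + (#(S₁ \ V₁) + #(S₂ \ V₂)) := by
  have hcover : S₁ ∩ S₂ ⊆ V₁ ∩ V₂ ∪ (S₁ \ V₁ ∪ S₂ \ V₂) := by
    intro x
    simp only [mem_inter, mem_union, mem_sdiff]
    tauto
  exact (card_le_card hcover).trans <|
    (card_union_le _ _).trans (Nat.add_le_add_left (card_union_le _ _) _)

theorem card_union_le_card_union_add_card_sdiff (S₁ S₂ V₁ V₂ : Finset α) :
    #(S₁ ∪ S₂) ≤ #(V₁ ∪ V₂) + (#(S₁ \ V₁) + #(S₂ \ V₂)) := by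
  have hcover : S₁ ∪ S₂ ⊆ V₁ ∪ V₂ ∪ (S₁ \ V₁ ∪ S₂ \ V₂) := by
    intro x
    simp only [mem_union, mem_sdiff]
    tauto
  exact (card_le_card hcover).trans <|
    (card_union_le _ _).trans (Nat.add_le_add_left (card_union_le _ _) _)

end Finset

theorem abs_div_sub_div_le_of_le_add {i u I U ε : ℝ} (hi : 0 ≤ i) (hiI : i ≤ I) (hIU : I ≤ U)
    (hu : 0 < u) (huU : u ≤ U) (hI : I ≤ i + ε * U) (hU : U ≤ u + ε * U) (hε : ε < 1) :
    |i / u - I / U| ≤ ε / (1 - ε) := by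
  have hU0 : 0 < U := hu.trans_le huU
  have hnum : |i * U - I * u| ≤ ε * U * U := by
    rw [abs_le]
    constructor
    · nlinarith [mul_nonneg hi (sub_nonneg.mpr huU)]
    · nlinarith [mul_nonneg (hi.trans (hiI.trans hIU)) (sub_nonneg.mpr huU)]
  have hden : (1 - ε) * U ≤ u := by linarith
  rw [div_sub_div _ _ hu.ne' hU0.ne', abs_div, abs_of_pos (mul_pos hu hU0),
    div_le_div_iff₀ (mul_pos hu hU0) (sub_pos.mpr hε)]
  have hε0 : 0 ≤ ε := by nlinarith
  calc |i * U - u * I| * (1 - ε) = |i * U - I * u| * (1 - ε) := by rw [mul_comm u I]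
    _ ≤ ε * U * U * (1 - ε) := mul_le_mul_of_nonneg_right hnum (sub_pos.mpr hε).le
    _ = ε * U * ((1 - ε) * U) := by ring
    _ ≤ ε * U * u := mul_le_mul_of_nonneg_left hden (by positivity)
    _ = ε * (u * U) := by ring

theorem jaccard_subset_approx_general {α : Type*} [DecidableEq α]
    (S₁ S₂ V₁ V₂ : Finset α)
    (hV₁ : V₁ ⊆ S₁) (hV₂ : V₂ ⊆ S₂) (η : ℝ) (hη0 : 0 ≤ η) (hη : η < 1 / 2)
    (h₁ : ((S₁ \ V₁).card : ℝ) ≤ η * (S₁ ∪ S₂).card)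
    (h₂ : ((S₂ \ V₂).card : ℝ) ≤ η * (S₁ ∪ S₂).card)
    (hV : (V₁ ∪ V₂).Nonempty) :
    |((V₁ ∩ V₂).card : ℝ) / ((V₁ ∪ V₂).card : ℝ) -
        ((S₁ ∩ S₂).card : ℝ) / ((S₁ ∪ S₂).card : ℝ)| ≤ 4 * η / (1 - 2 * η) := by
  have hinter : (#(S₁ ∩ S₂) : ℝ) ≤ #(V₁ ∩ V₂) + (#(S₁ \ V₁) + #(S₂ \ V₂)) := by
    exact_mod_cast card_inter_le_card_inter_add_card_sdiff S₁ S₂ V₁ V₂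
  have hunion : (#(S₁ ∪ S₂) : ℝ) ≤ #(V₁ ∪ V₂) + (#(S₁ \ V₁) + #(S₂ \ V₂)) := by
    exact_mod_cast card_union_le_card_union_add_card_sdiff S₁ S₂ V₁ V₂
  have hsharp := abs_div_sub_div_le_of_le_add (i := #(V₁ ∩ V₂)) (u := #(V₁ ∪ V₂))
    (I := #(S₁ ∩ S₂)) (U := #(S₁ ∪ S₂)) (ε := 2 * η) (by positivity)
    (by exact_mod_cast card_le_card (inter_subset_inter hV₁ hV₂))
    (by exact_mod_cast card_le_card inter_subset_union)
    (by exact_mod_cast card_pos.mpr hV)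
    (by exact_mod_cast card_le_card (union_subset_union hV₁ hV₂))
    (by linarith) (by linarith) (by linarith)
  exact hsharp.trans (div_le_div_of_nonneg_right (by linarith) (by linarith))

/-- If `V_1 ⊆ S_1`, `V_2 ⊆ S_2` cover the true clusters up to an
`η`-fraction of `|S_1 ∪ S_2|` (with `η < 1/2`) and `V_1 ∪ V_2 ≠ ∅`, then the
empirical correlation `J(V_1,V_2)` is within `4η/(1-2η)` of
`ρ* = J(S_1,S_2)`. -/
theorem jaccard_subset_approx {α : Type*} [DecidableEq α]
    (S₁ S₂ V₁ V₂ : Finset α) (hS₁ : S₁.Nonempty) (hS₂ : S₂.Nonempty)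
    (hV₁ : V₁ ⊆ S₁) (hV₂ : V₂ ⊆ S₂) (η : ℝ) (hη0 : 0 ≤ η) (hη : η < 1 / 2)
    (h₁ : ((S₁ \ V₁).card : ℝ) ≤ η * (S₁ ∪ S₂).card)
    (h₂ : ((S₂ \ V₂).card : ℝ) ≤ η * (S₁ ∪ S₂).card)
    (hV : (V₁ ∪ V₂).Nonempty) :
    |((V₁ ∩ V₂).card : ℝ) / ((V₁ ∪ V₂).card : ℝ) -
        ((S₁ ∩ S₂).card : ℝ) / ((S₁ ∪ S₂).card : ℝ)| ≤ 4 * η / (1 - 2 * η) :=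
  jaccard_subset_approx_general S₁ S₂ V₁ V₂ hV₁ hV₂ η hη0 hη h₁ h₂ hV
end
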